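/- arXiv:1402.0461 — 2 statements merged into one kernel-verified Lean document; each statement's English description precedes it below -/
import Mathlib

section
/- Let x₁ < … < x_N be the Gauss–Lobatto–Legendre nodes on [-1,1], ω_n the corresponding quadrature weights, l_m the Lagrange interpolation polynomials, D the differentiation matrix D_{nm} = l_m'(x_n), and H = diag(ω_n). If the quadrature ∑ u(x_n)ω_n is exact for all polynomials of degree ≤ 2N-3, then DᵀH + HD = Q where Q = diag(-1, 0, …, 0, 1). -/
/-!
The polynomial `(l_i l_j)'` has degree at most `2N - 3`, so the quadrature integrates it exactly.
By the product rule and `l_m(x_k) = δ_{mk}`, its value at `x_k` is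
`l_i'(x_k) δ_{jk} + δ_{ik} l_j'(x_k)`, so the quadrature sum is `l_i'(x_j) ω_j + l_j'(x_i) ω_i`,
the `(i, j)` entry of `DᵀH + HD`. The exact integral is `(l_i l_j)(1) - (l_i l_j)(-1)`, and since
`±1` are the first and last nodes this is `δ_{iN} δ_{jN} - δ_{i1} δ_{j1}`, the entry of `Q`.
-/

open Matrix Polynomial

namespace Polynomial

theorem natDegree_derivative_mul_le {R : Type*} [CommSemiring R] {p q : R[X]} {a b : ℕ}
    (hp : p.natDegree ≤ a) (hq : q.natDegree ≤ b) :
    (derivative (p * q)).natDegree ≤ a + b - 1 :=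
  (natDegree_derivative_le _).trans (Nat.sub_le_sub_right (natDegree_mul_le.trans (by omega)) 1)

theorem integral_eval_derivative (p : ℝ[X]) (a b : ℝ) :
    ∫ t in a..b, (derivative p).eval t = p.eval b - p.eval a :=
  intervalIntegral.integral_eq_sub_of_hasDerivAt (fun t _ => p.hasDerivAt t)
    (p.derivative.continuous.intervalIntegrable a b)

end Polynomial

section CardinalBasis

variable {ι R : Type*} [Fintype ι] [DecidableEq ι] [CommSemiring R]

theorem sum_eval_derivative_mul_cardinal {x : ι → R} {L : ι → R[X]}
    (hL : ∀ m k, (L m).eval (x k) = if k = m then 1 else 0) (ω : ι → R) (i j : ι) :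
    ∑ k, (derivative (L i * L j)).eval (x k) * ω k =
      (derivative (L i)).eval (x j) * ω j + (derivative (L j)).eval (x i) * ω i := by
  have hterm : ∀ k, (derivative (L i * L j)).eval (x k) * ω k =
      (if k = j then (derivative (L i)).eval (x k) * ω k else 0) +
        (if k = i then (derivative (L j)).eval (x k) * ω k else 0) := by
    intro k
    simp only [derivative_mul, eval_add, eval_mul, hL]
    split_ifs <;> ring
  simp only [hterm, Finset.sum_add_distrib, Finset.sum_ite_eq', Finset.mem_univ, if_true]

theorem transpose_mul_diagonal_add_diagonal_mul_apply (D : Matrix ι ι R) (ω : ι → R) (i j : ι) :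
    (Dᵀ * diagonal ω + diagonal ω * D) i j = D j i * ω j + ω i * D i j := by
  rw [Matrix.add_apply, mul_diagonal, diagonal_mul, transpose_apply]

theorem transpose_mul_diagonal_add_diagonal_mul_eq_of_exact {x : ι → ℝ} {L : ι → ℝ[X]}
    (hL : ∀ m k, (L m).eval (x k) = if k = m then 1 else 0) (ω : ι → ℝ) (a b : ℝ)
    (hexact : ∀ i j, ∑ k, (derivative (L i * L j)).eval (x k) * ω k =
      ∫ t in a..b, (derivative (L i * L j)).eval t)
    (D : Matrix ι ι ℝ) (hD : ∀ k m, D k m = (derivative (L m)).eval (x k)) :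
    Dᵀ * diagonal ω + diagonal ω * D =
      Matrix.of fun i j => (L i * L j).eval b - (L i * L j).eval a := by
  ext i j
  rw [transpose_mul_diagonal_add_diagonal_mul_apply, hD, hD, of_apply,
    ← integral_eval_derivative, ← hexact, sum_eval_derivative_mul_cardinal hL]
  ring

end CardinalBasis

theorem of_ite_last_mul_sub_ite_zero_mul_eq_diagonal {R : Type*} [Ring R] (n : ℕ) :
    (Matrix.of fun i j : Fin (n + 2) =>
      (if Fin.last (n + 1) = i then (1 : R) else 0) * (if Fin.last (n + 1) = j then 1 else 0) -
        (if 0 = i then 1 else 0) * (if 0 = j then 1 else 0)) =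
      diagonal fun i => if i = 0 then -1 else if i = Fin.last (n + 1) then 1 else 0 := by
  ext i j
  rcases eq_or_ne i j with rfl | hij
  · rcases eq_or_ne i 0 with rfl | h0
    · simp
    · rcases eq_or_ne i (Fin.last (n + 1)) with rfl | hl
      · simp
      · simp [h0, hl, Ne.symm h0, Ne.symm hl]
  · simp only [of_apply, diagonal_apply_ne _ hij]
    split_ifs <;> simp_all

theorem stmt5_general (n : ℕ) (N : ℕ) (hN : N = n + 2)
    (x : Fin (n + 2) → ℝ)
    (hx0 : x 0 = -1) (hxN : x (Fin.last (n + 1)) = 1)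
    (ω : Fin (n + 2) → ℝ)
    (L : Fin (n + 2) → Polynomial ℝ)
    (hLdeg : ∀ m, (L m).natDegree ≤ N - 1)
    (hLδ : ∀ m k : Fin (n + 2), (L m).eval (x k) = if k = m then 1 else 0)
    (hquad : ∀ p : Polynomial ℝ, p.natDegree ≤ 2 * N - 3 →
      (∑ k, p.eval (x k) * ω k) = ∫ t in (-1 : ℝ)..1, p.eval t)
    (D H : Matrix (Fin (n + 2)) (Fin (n + 2)) ℝ)
    (hD : ∀ k m, D k m = (Polynomial.derivative (L m)).eval (x k))
    (hH : H = Matrix.diagonal ω) :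
    Dᵀ * H + H * D =
      Matrix.diagonal (fun i : Fin (n + 2) =>
        if i = 0 then (-1 : ℝ) else if i = Fin.last (n + 1) then 1 else 0) := by
  subst hH hN
  have hexact : ∀ i j, ∑ k, (derivative (L i * L j)).eval (x k) * ω k =
      ∫ t in (x 0)..(x (Fin.last (n + 1))), (derivative (L i * L j)).eval t := fun i j => by
    rw [hx0, hxN]
    exact hquad _ ((natDegree_derivative_mul_le (hLdeg i) (hLdeg j)).trans (by omega))
  rw [transpose_mul_diagonal_add_diagonal_mul_eq_of_exact hLδ ω _ _ hexact D hD]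
  simp only [eval_mul, hLδ]
  exact of_ite_last_mul_sub_ite_zero_mul_eq_diagonal n

/-- Let x₁ < … < x_N be the GLL nodes on [-1,1] (so x₁ = -1,
x_N = 1), ω_n the quadrature weights, l_m the Lagrange polynomials
(degree ≤ N-1, l_m(x_n) = δ_{mn}), D the differentiation matrix
D_{nm} = l_m'(x_n), and H = diag(ω_n). If the quadrature ∑ u(x_n)ω_n is exact
for all polynomials of degree ≤ 2N-3, then DᵀH + HD = Q = diag(-1,0,…,0,1). -/
theorem stmt5 (n : ℕ) (N : ℕ) (hN : N = n + 2)
    (x : Fin (n + 2) → ℝ) (hmono : StrictMono x)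
    (hx0 : x 0 = -1) (hxN : x (Fin.last (n + 1)) = 1)
    (ω : Fin (n + 2) → ℝ)
    (L : Fin (n + 2) → Polynomial ℝ)
    (hLdeg : ∀ m, (L m).natDegree ≤ N - 1)
    (hLδ : ∀ m k : Fin (n + 2), (L m).eval (x k) = if k = m then 1 else 0)
    (hquad : ∀ p : Polynomial ℝ, p.natDegree ≤ 2 * N - 3 →
      (∑ k, p.eval (x k) * ω k) = ∫ t in (-1 : ℝ)..1, p.eval t)
    (D H : Matrix (Fin (n + 2)) (Fin (n + 2)) ℝ)
    (hD : ∀ k m, D k m = (Polynomial.derivative (L m)).eval (x k))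
    (hH : H = Matrix.diagonal ω) :
    Dᵀ * H + H * D =
      Matrix.diagonal (fun i : Fin (n + 2) =>
        if i = 0 then (-1 : ℝ) else if i = Fin.last (n + 1) then 1 else 0) :=
  stmt5_general n N hN x hx0 hxN ω L hLdeg hLδ hquad D H hD hH
end

section
/- Continuity of the interface factor: let x(ξ) be a C¹ diffeomorphism on each of two adjacent blocks with common face Γ = {ξ_l = const}, with transformations agreeing on Γ in the tangential directions. Let T = (∂ξ/∂x), J = det(∂x/∂ξ), T_{(l)} = ±|∇_x ξ_l|. Then J^{-1}|T_{(l)}|^{-1} = |ν_{lj} a_{lj}| where a_{lj} are the cofactors of (∂ξ/∂x), ν the unit normal of Γ, and consequently J^{-1}|T_{(l)}^{-1}| takes the same value on Γ computed from either block. -/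
/-!
Let `S = ∂x/∂ξ` and `T = S⁻¹ = J⁻¹ adj S`. Expanding `det T = J⁻¹` along row `l` gives
`J⁻¹ |T_(l)|⁻¹ = |∑ⱼ ν_{lj} a_{lj}|`. Moreover `J⁻¹ |T_(l)|⁻¹ = |(adj S)_{l•}|⁻¹`, and row `l` of
`adj S` consists of minors of `S` with column `l` deleted, so it only sees the tangential
derivatives `∂x/∂ξ_m`, `m ≠ l`, which agree on both sides of `Γ`.
-/

open Matrix

/-- The (l,j) cofactor of a 3×3 matrix: (-1)^{l+j} times the (l,j) minor. -/
noncomputable def cof3' (T : Matrix (Fin 3) (Fin 3) ℝ) (l j : Fin 3) : ℝ :=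
  (-1) ^ ((l : ℕ) + (j : ℕ)) * (T.submatrix l.succAbove j.succAbove).det

theorem cof3'_eq_adjugate (A : Matrix (Fin 3) (Fin 3) ℝ) (l j : Fin 3) :
    cof3' A l j = A.adjugate j l := by
  rw [cof3', adjugate_fin_succ_eq_det_submatrix, add_comm]

theorem det_eq_sum_mul_cof3' (A : Matrix (Fin 3) (Fin 3) ℝ) (l : Fin 3) :
    A.det = ∑ j, A l j * cof3' A l j := by
  have h := congr_fun (congr_fun (mul_adjugate A) l) l
  simpa [mul_apply, cof3'_eq_adjugate] using h.symm

theorem inv_det_mul_inv_sqrt_eq_abs_sum_mul_cof3' (S : Matrix (Fin 3) (Fin 3) ℝ) (l : Fin 3)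
    (hS : 0 ≤ S.det) :
    S.det⁻¹ * (√(∑ j, (S⁻¹ l j) ^ 2))⁻¹ =
      |∑ j, (S⁻¹ l j / √(∑ j', (S⁻¹ l j') ^ 2)) * cof3' S⁻¹ l j| := by
  have hsum : ∑ j, (S⁻¹ l j / √(∑ j', (S⁻¹ l j') ^ 2)) * cof3' S⁻¹ l j =
      S.det⁻¹ / √(∑ j', (S⁻¹ l j') ^ 2) := by
    simp only [div_mul_eq_mul_div, ← Finset.sum_div, ← det_eq_sum_mul_cof3', det_nonsing_inv,
      Ring.inverse_eq_inv']
  rw [hsum, abs_div, abs_of_nonneg (inv_nonneg.2 hS), abs_of_nonneg (Real.sqrt_nonneg _),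
    div_eq_mul_inv]

theorem inv_det_mul_inv_sqrt_sum_inv_sq {n : Type*} [Fintype n] [DecidableEq n]
    (S : Matrix n n ℝ) (l : n) (hS : 0 < S.det) :
    S.det⁻¹ * (√(∑ j, (S⁻¹ l j) ^ 2))⁻¹ = (√(∑ j, (S.adjugate l j) ^ 2))⁻¹ := by
  have hrow : ∑ j, (S⁻¹ l j) ^ 2 = S.det⁻¹ ^ 2 * ∑ j, (S.adjugate l j) ^ 2 := by
    simp only [inv_def, Ring.inverse_eq_inv', Matrix.smul_apply, smul_eq_mul, mul_pow, Finset.mul_sum]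
  rw [hrow, Real.sqrt_mul (sq_nonneg _), Real.sqrt_sq (inv_nonneg.2 hS.le), mul_inv, inv_inv,
    ← mul_assoc, inv_mul_cancel₀ hS.ne', one_mul]

theorem adjugate_apply_eq_of_forall_col_eq {R : Type*} [CommRing R] {n : ℕ}
    {A B : Matrix (Fin (n + 1)) (Fin (n + 1)) R} {l : Fin (n + 1)}
    (h : ∀ m, m ≠ l → ∀ j, A j m = B j m) (j : Fin (n + 1)) :
    A.adjugate l j = B.adjugate l j := by
  rw [adjugate_fin_succ_eq_det_submatrix, adjugate_fin_succ_eq_det_submatrix]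
  congr 2
  ext a b
  exact h _ (Fin.succAbove_ne l b) _

/-- `Sm`, `Sp` are the Jacobians `∂x/∂ξ` of the two blocks at a common point of `Γ = {ξ_l = const}`,
so `T = S⁻¹`, `J = det S` and `T_(l) = √(∑ⱼ T_{lj}²)`. -/
theorem stmt18 (Sm Sp : Matrix (Fin 3) (Fin 3) ℝ) (l : Fin 3)
    (hJm : 0 < Sm.det) (hJp : 0 < Sp.det)
    (hcols : ∀ m : Fin 3, m ≠ l → ∀ j : Fin 3, Sm j m = Sp j m) :
    ((Sm.det)⁻¹ * (Real.sqrt (∑ j, (Sm⁻¹ l j) ^ 2))⁻¹ =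
      |∑ j, (Sm⁻¹ l j / Real.sqrt (∑ j', (Sm⁻¹ l j') ^ 2)) * cof3' Sm⁻¹ l j|) ∧
    ((Sp.det)⁻¹ * (Real.sqrt (∑ j, (Sp⁻¹ l j) ^ 2))⁻¹ =
      |∑ j, (Sp⁻¹ l j / Real.sqrt (∑ j', (Sp⁻¹ l j') ^ 2)) * cof3' Sp⁻¹ l j|) ∧
    (Sm.det)⁻¹ * (Real.sqrt (∑ j, (Sm⁻¹ l j) ^ 2))⁻¹ =
      (Sp.det)⁻¹ * (Real.sqrt (∑ j, (Sp⁻¹ l j) ^ 2))⁻¹ := by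
  refine ⟨inv_det_mul_inv_sqrt_eq_abs_sum_mul_cof3' Sm l hJm.le,
    inv_det_mul_inv_sqrt_eq_abs_sum_mul_cof3' Sp l hJp.le, ?_⟩
  rw [inv_det_mul_inv_sqrt_sum_inv_sq Sm l hJm, inv_det_mul_inv_sqrt_sum_inv_sq Sp l hJp]
  simp only [adjugate_apply_eq_of_forall_col_eq hcols]
end
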